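/- arXiv:2504.00833 — 2 statements merged into one kernel-verified Lean document; each statement's English description precedes it below -/
import Mathlib

section
/- Let A be a real symmetric positive semidefinite n×n matrix with orthonormal eigenbasis v₁, ..., vₙ and corresponding eigenvalues λ₁ > λ₂ ≥ λ₃ ≥ ⋯ ≥ λₙ ≥ 0 with λ₁ > 0. Let x₀ ∈ ℝ^n be a unit vector with c := ⟨v₁, x₀⟩ ≠ 0. Then for every natural number k, A^k x₀ ≠ 0 and 1 − ⟨v₁, A^k x₀⟩² / ‖A^k x₀‖² ≤ (λ₂/λ₁)^{2k} · (1 − c²)/c². -/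
/-!
Expand `x₀` in the eigenbasis: `A^k` multiplies the `i`-th coordinate by `λᵢ^k`. The squared sine
of the angle to `v₁` is at most its squared tangent, the ratio of the mass off `v₁` to the mass
on `v₁`. The `v₁`-coordinate is scaled by exactly `λ₁^k` and every other coordinate by at most
`λ₂^k` in absolute value, so the tangent ratio at step `k` is at most `(λ₂/λ₁)^{2k} (1 - c²)/c²`.
-/

open Matrix Finset

open scoped RealInnerProductSpace

lemma Module.End.pow_apply_of_apply_eq_smul {R M : Type*} [CommSemiring R] [AddCommMonoid M]
    [Module R M] {f : Module.End R M} {μ : R} {x : M} (h : f x = μ • x) (k : ℕ) :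
    (f ^ k) x = μ ^ k • x := by
  induction k with
  | zero => simp
  | succ k ih => rw [pow_succ', Module.End.mul_apply, ih, map_smul, h, smul_smul, pow_succ]

lemma Matrix.toEuclideanLin_pow {ι 𝕜 : Type*} [RCLike 𝕜] [Fintype ι] [DecidableEq ι]
    (A : Matrix ι ι 𝕜) (k : ℕ) : toEuclideanLin (A ^ k) = toEuclideanLin A ^ k := by
  simp only [← coe_toEuclideanCLM_eq_toEuclideanLin, map_pow,
    ContinuousLinearMap.toLinearMap_pow]

lemma Orthonormal.exists_orthonormalBasis_coe_eq {ι 𝕜 E : Type*} [RCLike 𝕜]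
    [NormedAddCommGroup E] [InnerProductSpace 𝕜 E] [Fintype ι] [Nonempty ι] {v : ι → E}
    (hv : Orthonormal 𝕜 v) (hcard : Fintype.card ι = Module.finrank 𝕜 E) :
    ∃ b : OrthonormalBasis ι 𝕜 E, ⇑b = v := by
  have hb := coe_basisOfOrthonormalOfCardEqFinrank hv hcard
  exact ⟨_, (Module.Basis.coe_toOrthonormalBasis _ (by rwa [hb])).trans hb⟩

lemma OrthonormalBasis.inner_apply_of_apply_eq_smul {ι 𝕜 E : Type*} [Fintype ι] [RCLike 𝕜]
    [NormedAddCommGroup E] [InnerProductSpace 𝕜 E] (b : OrthonormalBasis ι 𝕜 E)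
    {T : E →ₗ[𝕜] E} {μ : ι → 𝕜} (hT : ∀ j, T (b j) = μ j • b j) (i : ι) (x : E) :
    inner 𝕜 (b i) (T x) = μ i * inner 𝕜 (b i) x := by
  conv_lhs => rw [← b.sum_repr' x]
  simp only [map_sum, map_smul, hT, smul_smul]
  rw [b.orthonormal.inner_right_fintype, mul_comm]

section Real

variable {ι E : Type*} [Fintype ι] [DecidableEq ι] [NormedAddCommGroup E] [InnerProductSpace ℝ E]

lemma one_sub_inner_sq_div_norm_sq_le {u y : E} (hu : ‖u‖ = 1) (h : ⟪u, y⟫ ≠ 0) :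
    1 - ⟪u, y⟫ ^ 2 / ‖y‖ ^ 2 ≤ (‖y‖ ^ 2 - ⟪u, y⟫ ^ 2) / ⟪u, y⟫ ^ 2 := by
  have hle : ⟪u, y⟫ ^ 2 ≤ ‖y‖ ^ 2 := by
    obtain ⟨hlo, hhi⟩ := abs_le.mp (abs_real_inner_le_norm u y)
    simpa [hu] using sq_le_sq' hlo hhi
  have hpos : 0 < ⟪u, y⟫ ^ 2 := by positivity
  rw [one_sub_div (hpos.trans_le hle).ne']
  exact div_le_div_of_nonneg_left (sub_nonneg.mpr hle) hpos hle

namespace OrthonormalBasis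

lemma norm_sq_sub_inner_sq (b : OrthonormalBasis ι ℝ E) (i₀ : ι) (y : E) :
    ‖y‖ ^ 2 - ⟪b i₀, y⟫ ^ 2 = ∑ i ∈ univ.erase i₀, ⟪b i, y⟫ ^ 2 := by
  rw [← b.sum_sq_inner_right, ← sum_erase_add _ _ (mem_univ i₀), add_sub_cancel_right]

lemma norm_sq_sub_inner_sq_apply_le (b : OrthonormalBasis ι ℝ E)
    {T : E →ₗ[ℝ] E} {μ : ι → ℝ} (hT : ∀ j, T (b j) = μ j • b j) {i₀ : ι} {r : ℝ}
    (hr : ∀ i ≠ i₀, |μ i| ≤ r) (x : E) :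
    ‖T x‖ ^ 2 - ⟪b i₀, T x⟫ ^ 2 ≤ r ^ 2 * (‖x‖ ^ 2 - ⟪b i₀, x⟫ ^ 2) := by
  rw [norm_sq_sub_inner_sq, norm_sq_sub_inner_sq, mul_sum]
  refine sum_le_sum fun i hi => ?_
  rw [b.inner_apply_of_apply_eq_smul hT, mul_pow]
  obtain ⟨hlo, hhi⟩ := abs_le.mp (hr i (ne_of_mem_erase hi))
  exact mul_le_mul_of_nonneg_right (sq_le_sq' hlo hhi) (sq_nonneg _)

end OrthonormalBasis

end Real

theorem power_method_bound_general
    (n : ℕ) [NeZero n]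
    (A : Matrix (Fin n) (Fin n) ℝ)
    (v : Fin n → EuclideanSpace ℝ (Fin n)) (hv : Orthonormal ℝ v)
    (lam : Fin n → ℝ)
    (heig : ∀ i, Matrix.toEuclideanLin A (v i) = lam i • v i)
    (hdec : ∀ i j : Fin n, i ≤ j → lam j ≤ lam i)
    (hnn : ∀ i, 0 ≤ lam i)
    (hpos : 0 < lam 0)
    (x₀ : EuclideanSpace ℝ (Fin n)) (hx₀ : ‖x₀‖ = 1)
    (c : ℝ) (hc : c = (inner ℝ (v 0) x₀ : ℝ)) (hc0 : c ≠ 0) :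
    ∀ k : ℕ,
      Matrix.toEuclideanLin (A ^ k) x₀ ≠ 0 ∧
      1 - (inner ℝ (v 0) (Matrix.toEuclideanLin (A ^ k) x₀) : ℝ) ^ 2
          / ‖Matrix.toEuclideanLin (A ^ k) x₀‖ ^ 2
        ≤ (lam 1 / lam 0) ^ (2 * k) * ((1 - c ^ 2) / c ^ 2) := by
  intro k
  obtain ⟨b, rfl⟩ := hv.exists_orthonormalBasis_coe_eq (by simp)
  have hpow : ∀ i, (toEuclideanLin A ^ k) (b i) = lam i ^ k • b i := fun i =>
    Module.End.pow_apply_of_apply_eq_smul (heig i) k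
  have hgap : ∀ i ≠ 0, |lam i ^ k| ≤ lam 1 ^ k := fun i hi => by
    rw [abs_of_nonneg (pow_nonneg (hnn i) k)]
    exact pow_le_pow_left₀ (hnn i) (hdec 1 i (Fin.one_le_of_ne_zero hi)) k
  rw [toEuclideanLin_pow]
  have hinner : ⟪b 0, (toEuclideanLin A ^ k) x₀⟫ = lam 0 ^ k * c := by
    rw [b.inner_apply_of_apply_eq_smul hpow, hc]
  have hne : ⟪b 0, (toEuclideanLin A ^ k) x₀⟫ ≠ 0 := by
    rw [hinner]; positivity
  refine ⟨fun h => hne (by rw [h, inner_zero_right]), ?_⟩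
  have htail := b.norm_sq_sub_inner_sq_apply_le hpow hgap x₀
  rw [hx₀, ← hc, one_pow] at htail
  calc _ ≤ _ := one_sub_inner_sq_div_norm_sq_le (b.orthonormal.1 0) hne
    _ ≤ (lam 1 ^ k) ^ 2 * (1 - c ^ 2) / (lam 0 ^ k * c) ^ 2 := by
        rw [hinner] at htail ⊢
        gcongr
    _ = _ := by rw [div_pow, pow_mul', pow_mul', div_mul_div_comm, mul_pow]

/-- convergence bound for the power method. -/
theorem power_method_bound
    (n : ℕ) [NeZero n] (hn : 2 ≤ n)
    (A : Matrix (Fin n) (Fin n) ℝ) (hA : A.PosSemidef)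
    (v : Fin n → EuclideanSpace ℝ (Fin n)) (hv : Orthonormal ℝ v)
    (lam : Fin n → ℝ)
    (heig : ∀ i, Matrix.toEuclideanLin A (v i) = lam i • v i)
    (hdec : ∀ i j : Fin n, i ≤ j → lam j ≤ lam i)
    (hgap : lam 1 < lam 0)
    (hnn : ∀ i, 0 ≤ lam i)
    (hpos : 0 < lam 0)
    (x₀ : EuclideanSpace ℝ (Fin n)) (hx₀ : ‖x₀‖ = 1)
    (c : ℝ) (hc : c = (inner ℝ (v 0) x₀ : ℝ)) (hc0 : c ≠ 0) :
    ∀ k : ℕ,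
      Matrix.toEuclideanLin (A ^ k) x₀ ≠ 0 ∧
      1 - (inner ℝ (v 0) (Matrix.toEuclideanLin (A ^ k) x₀) : ℝ) ^ 2
          / ‖Matrix.toEuclideanLin (A ^ k) x₀‖ ^ 2
        ≤ (lam 1 / lam 0) ^ (2 * k) * ((1 - c ^ 2) / c ^ 2) :=
  power_method_bound_general n A v hv lam heig hdec hnn hpos x₀ hx₀ c hc hc0
end

section
/- Let n ≥ 1 and a ≥ 0 be integers, let A be an n×n complex matrix, and let U be a unitary matrix of size (2^a·n)×(2^a·n) whose top-left n×n block equals A, i.e. U_{(0,j),(0,k)} = A_{jk} under the identification of indices with pairs in {0,...,2^a−1}×{0,...,n−1}. Then for every real number p > 1 there exists a unitary matrix U' of size (2^{a+1}·n)×(2^{a+1}·n) whose top-left n×n block equals (1/p)·A. -/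
open Matrix Kronecker

/-! A real rotation `V` of the plane with cosine `1/p` is a `2 × 2` unitary with corner entry
`1/p`, so the Kronecker product `V ⊗ U` is unitary and its corner `n × n` block is `(1/p) • A`.
Merging the new qubit into the ancilla register turns `V ⊗ U` into a block encoding with
`a + 1` ancilla qubits. -/

namespace Matrix

theorem reindex_mem_unitaryGroup {m n α : Type*} [Fintype m] [DecidableEq m] [Fintype n]
    [DecidableEq n] [CommRing α] [StarRing α] (e : m ≃ n) {U : Matrix m m α}
    (hU : U ∈ unitaryGroup m α) : reindex e e U ∈ unitaryGroup n α := by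
  rw [mem_unitaryGroup_iff, star_eq_conjTranspose, conjTranspose_reindex, reindex_apply,
    reindex_apply, submatrix_mul_equiv, ← star_eq_conjTranspose, mem_unitaryGroup_iff.mp hU,
    submatrix_one_equiv]

theorem rotation_mem_unitaryGroup {𝕜 : Type*} [RCLike 𝕜] {c s : ℝ} (h : c ^ 2 + s ^ 2 = 1) :
    !![(c : 𝕜), -s; s, c] ∈ unitaryGroup (Fin 2) 𝕜 := by
  have h' : (c : 𝕜) ^ 2 + (s : 𝕜) ^ 2 = 1 := by exact_mod_cast h
  rw [mem_unitaryGroup_iff, star_eq_conjTranspose, eta_fin_two !![(c : 𝕜), -s; s, c]ᴴ]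
  simp only [conjTranspose_apply, of_apply, cons_val', cons_val_zero, cons_val_one, empty_val',
    cons_val_fin_one, RCLike.star_def, RCLike.conj_ofReal, star_neg]
  rw [mul_fin_two, one_fin_two]
  simp only [EmbeddingLike.apply_eq_iff_eq, vecCons_inj, and_true]
  refine ⟨⟨?_, ?_⟩, ?_, ?_⟩ <;> first | ring1 | linear_combination h'

theorem exists_mem_unitaryGroup_fin_two_apply_zero_zero {𝕜 : Type*} [RCLike 𝕜] {c : ℝ}
    (hc : |c| ≤ 1) : ∃ V ∈ unitaryGroup (Fin 2) 𝕜, V 0 0 = c := by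
  refine ⟨_, rotation_mem_unitaryGroup (s := √(1 - c ^ 2)) ?_, rfl⟩
  rw [Real.sq_sqrt (by nlinarith [abs_le.mp hc]), add_sub_cancel]

end Matrix

def finTwoProdPowEquiv (a : ℕ) (ι : Type*) : Fin 2 × (Fin (2 ^ a) × ι) ≃ Fin (2 ^ (a + 1)) × ι :=
  (Equiv.prodAssoc _ _ _).symm.trans
    ((finProdFinEquiv.trans (finCongr (pow_succ' 2 a).symm)).prodCongr (Equiv.refl ι))

theorem finTwoProdPowEquiv_symm_apply_zero (a : ℕ) {ι : Type*} (i : ι) :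
    (finTwoProdPowEquiv a ι).symm (⟨0, Nat.two_pow_pos (a + 1)⟩, i) =
      (0, (⟨0, Nat.two_pow_pos a⟩, i)) := by
  rw [Equiv.symm_apply_eq]
  ext
  · simp [finTwoProdPowEquiv, finProdFinEquiv_apply_val]
  · rfl

theorem block_encoding_scaling_general
    (n a : ℕ)
    (A : Matrix (Fin n) (Fin n) ℂ)
    (U : Matrix (Fin (2 ^ a) × Fin n) (Fin (2 ^ a) × Fin n) ℂ)
    (hU : U ∈ Matrix.unitaryGroup (Fin (2 ^ a) × Fin n) ℂ)
    (hblock : ∀ j k : Fin n,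
      U ((⟨0, Nat.two_pow_pos a⟩ : Fin (2 ^ a)), j)
        ((⟨0, Nat.two_pow_pos a⟩ : Fin (2 ^ a)), k) = A j k)
    (p : ℝ) (hp : 1 < p) :
    ∃ U' : Matrix (Fin (2 ^ (a + 1)) × Fin n) (Fin (2 ^ (a + 1)) × Fin n) ℂ,
      U' ∈ Matrix.unitaryGroup (Fin (2 ^ (a + 1)) × Fin n) ℂ ∧
      ∀ j k : Fin n,
        U' ((⟨0, Nat.two_pow_pos (a + 1)⟩ : Fin (2 ^ (a + 1))), j)
          ((⟨0, Nat.two_pow_pos (a + 1)⟩ : Fin (2 ^ (a + 1))), k)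
          = (1 / (p : ℂ)) * A j k := by
  have hp' : |p⁻¹| ≤ 1 := by
    rw [abs_inv, abs_of_pos (by linarith)]
    exact inv_le_one_of_one_le₀ hp.le
  obtain ⟨V, hV, hV00⟩ := exists_mem_unitaryGroup_fin_two_apply_zero_zero (𝕜 := ℂ) hp'
  refine ⟨reindex (finTwoProdPowEquiv a _) (finTwoProdPowEquiv a _) (V ⊗ₖ U),
    reindex_mem_unitaryGroup _ (kronecker_mem_unitary hV hU), fun j k => ?_⟩
  rw [reindex_apply, submatrix_apply, finTwoProdPowEquiv_symm_apply_zero,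
    finTwoProdPowEquiv_symm_apply_zero, kroneckerMap_apply, hV00, hblock, one_div,
    ← Complex.ofReal_inv]
  rfl

/-- a block encoding of `A` can be rescaled into a block encoding
of `(1/p)·A` for any `p > 1`, using one extra ancilla qubit. -/
theorem block_encoding_scaling
    (n a : ℕ) (hn : 1 ≤ n)
    (A : Matrix (Fin n) (Fin n) ℂ)
    (U : Matrix (Fin (2 ^ a) × Fin n) (Fin (2 ^ a) × Fin n) ℂ)
    (hU : U ∈ Matrix.unitaryGroup (Fin (2 ^ a) × Fin n) ℂ)
    (hblock : ∀ j k : Fin n,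
      U ((⟨0, Nat.two_pow_pos a⟩ : Fin (2 ^ a)), j)
        ((⟨0, Nat.two_pow_pos a⟩ : Fin (2 ^ a)), k) = A j k)
    (p : ℝ) (hp : 1 < p) :
    ∃ U' : Matrix (Fin (2 ^ (a + 1)) × Fin n) (Fin (2 ^ (a + 1)) × Fin n) ℂ,
      U' ∈ Matrix.unitaryGroup (Fin (2 ^ (a + 1)) × Fin n) ℂ ∧
      ∀ j k : Fin n,
        U' ((⟨0, Nat.two_pow_pos (a + 1)⟩ : Fin (2 ^ (a + 1))), j)
          ((⟨0, Nat.two_pow_pos (a + 1)⟩ : Fin (2 ^ (a + 1))), k)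
          = (1 / (p : ℂ)) * A j k :=
  block_encoding_scaling_general n a A U hU hblock p hp
end
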